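/- Let p ≥ 3 be a prime and G = ⟨s, t | t^{p²} = s^p = 1, s⁻¹ t s = t^{p+1}⟩ = C_{p²} ⋊ C_p. Then there is no automorphism of G sending s to s⁻¹. -/

import Mathlib

/-- Relations for the presentation `⟨s, t | t^(p²) = s^p = 1, s⁻¹ t s = t^(p+1)⟩`,
with `s = of 0` and `t = of 1`. -/
def heisRels (p : ℕ) : Set (FreeGroup (Fin 2)) :=
  {FreeGroup.of 1 ^ (p ^ 2), FreeGroup.of 0 ^ p,
    (FreeGroup.of 0)⁻¹ * FreeGroup.of 1 * FreeGroup.of 0 * (FreeGroup.of 1 ^ (p + 1))⁻¹}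

/-!
Every element of `G` has the form `s ^ b * t ^ m`, `t ^ p` is central, and for odd `p` the
`p`-th power map sends `s ^ b * t ^ m` to `t ^ (m * p)`: conjugation by `s ^ b` raises `t` to
`(1 + p) ^ b ≡ 1 + p * c`, and `∑ i < p, (1 + p * c) ^ i ≡ p [MOD p²]`. If `α s = s⁻¹`, then
`g = α t` satisfies `s * g = g ^ (p + 1) * s = g ^ p * g * s`; expanding both sides in normal form
gives `(g ^ p) ^ 2 = 1`, and since also `(g ^ p) ^ p = 1` with `p` odd, `g ^ p = 1`. But
`α (t ^ p) ≠ 1`, because `t ^ p` acts nontrivially on `ZMod (p ^ 2)` when `s` acts as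
multiplication by `(1 + p)⁻¹` and `t` as translation by `1`.
-/

open Finset

section CommutationRule

variable {M : Type*} [Group M] {x y : M} {u : ℕ}

theorem pow_mul_pow_eq_of_mul_eq (h : x * y = y * x ^ u) (n b : ℕ) :
    x ^ n * y ^ b = y ^ b * x ^ (n * u ^ b) := by
  have hconj (k : ℕ) : x ^ k * y = y * x ^ (k * u) := by
    have hx : y⁻¹ * x * y = x ^ u := by rw [mul_assoc, h, inv_mul_cancel_left]
    rw [← inv_mul_eq_iff_eq_mul, ← mul_assoc, mul_comm k, pow_mul, ← hx]
    simpa using (conj_pow (a := y⁻¹) (b := x) (i := k)).symm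
  induction b generalizing n with
  | zero => simp
  | succ b ih =>
    rw [pow_succ, ← mul_assoc, ih, mul_assoc, hconj, ← mul_assoc, pow_succ u, mul_assoc n]

theorem mul_pow_pow_eq_of_mul_eq (h : x * y = y * x ^ u) (m k : ℕ) :
    (y * x ^ m) ^ k = y ^ k * x ^ (m * ∑ i ∈ range k, u ^ i) := by
  induction k with
  | zero => simp
  | succ k ih =>
    have hcomm := pow_mul_pow_eq_of_mul_eq h (m * ∑ i ∈ range k, u ^ i) 1
    rw [pow_one, pow_one] at hcomm
    rw [pow_succ, ih, mul_assoc, ← mul_assoc (x ^ _), hcomm, geom_sum_succ, mul_assoc, ← pow_add,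
      ← mul_assoc, ← pow_succ]
    ring_nf

end CommutationRule

theorem geom_sum_one_add_mul_eq_of_sq_eq_zero {R : Type*} [CommRing R] {p : ℕ} (hp : Odd p)
    (hsq : (p : R) ^ 2 = 0) (c : R) : ∑ i ∈ range p, (1 + p * c) ^ i = p := by
  simpa [hsq, sub_eq_zero] using odd_sq_dvd_geom_sum₂_sub (1 : R) c hp

namespace heisRels

variable {p : ℕ}

theorem natCast_sq_eq_zero : (p : ZMod (p ^ 2)) ^ 2 = 0 := by
  exact_mod_cast ZMod.natCast_self (p ^ 2)

def oneAddUnit (p : ℕ) : (ZMod (p ^ 2))ˣ where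
  val := 1 + p
  inv := 1 - p
  val_inv := by linear_combination -natCast_sq_eq_zero (p := p)
  inv_val := by linear_combination -natCast_sq_eq_zero (p := p)

theorem oneAddUnit_pow_self : oneAddUnit p ^ p = 1 := by
  ext
  have := sq_dvd_add_pow_sub_sub (p : ZMod (p ^ 2)) 1 p
  simp only [natCast_sq_eq_zero, zero_dvd_iff, one_pow, one_mul] at this
  simpa [oneAddUnit, add_comm, ← sq, natCast_sq_eq_zero, sub_eq_zero] using this

def toPerm (p : ℕ) : Fin 2 → Equiv.Perm (ZMod (p ^ 2)) :=
  ![MulAction.toPermHom _ _ (oneAddUnit p)⁻¹, Equiv.addRight 1]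

theorem lift_toPerm_eq_one : ∀ r ∈ heisRels p, FreeGroup.lift (toPerm p) r = 1 := by
  rintro r (rfl | rfl | rfl)
  · ext x
    simp [toPerm]
  · rw [map_pow, FreeGroup.lift_apply_of, toPerm, Matrix.cons_val_zero, ← map_pow, inv_pow,
      oneAddUnit_pow_self, inv_one, map_one]
  · rw [map_mul, map_inv, mul_inv_eq_one]
    ext x
    simp only [toPerm, oneAddUnit, Units.inv_mk, MulAction.toPermHom_apply, map_mul, map_inv,
      map_pow, FreeGroup.lift_apply_of, Matrix.cons_val_zero, Matrix.cons_val_one,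
      Matrix.cons_val_fin_one, Equiv.Perm.coe_mul, Equiv.Perm.coe_inv, Function.comp_apply,
      Equiv.coe_addRight, MulAction.toPerm_apply, MulAction.toPerm_symm_apply, Units.smul_def,
      smul_eq_mul, Equiv.nsmul_addRight, nsmul_eq_mul, mul_one, Nat.cast_succ]
    linear_combination (-x) * natCast_sq_eq_zero (p := p)

local notation "G" => PresentedGroup (heisRels p)
local notation "s" => (PresentedGroup.of 0 : G)
local notation "t" => (PresentedGroup.of 1 : G)

theorem t_pow_sq : t ^ (p ^ 2) = 1 :=
  (map_pow _ _ _).symm.trans (PresentedGroup.one_of_mem (Or.inl rfl))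

theorem s_pow_self : s ^ p = 1 :=
  (map_pow _ _ _).symm.trans (PresentedGroup.one_of_mem (Or.inr (Or.inl rfl)))

theorem t_mul_s : t * s = s * t ^ (p + 1) := by
  have := PresentedGroup.one_of_mem (rels := heisRels p) (Or.inr (Or.inr rfl))
  rwa [map_mul, map_inv, mul_inv_eq_one, map_mul, map_mul, map_inv, map_pow, mul_assoc,
    inv_mul_eq_iff_eq_mul] at this

theorem t_pow_self_ne_one (hp : 2 ≤ p) : t ^ p ≠ 1 := by
  intro h
  have h0 := congrArg (fun g => PresentedGroup.toGroup lift_toPerm_eq_one g 0) h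
  simp only [toPerm, MulAction.toPermHom_apply, map_pow, PresentedGroup.toGroup.of,
    Matrix.cons_val_one, Matrix.cons_val_fin_one, Equiv.nsmul_addRight, nsmul_eq_mul, mul_one,
    Equiv.coe_addRight, zero_add, map_one, Equiv.Perm.coe_one, id_eq] at h0
  rw [ZMod.natCast_eq_zero_iff] at h0
  have := Nat.le_of_dvd (by omega) h0
  nlinarith

theorem commute_t_pow_self_s : Commute (t ^ p) s := by
  have h := pow_mul_pow_eq_of_mul_eq (t_mul_s (p := p)) p 1
  rwa [pow_one, pow_one, mul_add, mul_one, ← sq, pow_add, t_pow_sq, one_mul] at h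

theorem t_mul_s_pow (b : ℕ) : t * s ^ b = s ^ b * t ^ ((p + 1) ^ b) := by
  simpa using pow_mul_pow_eq_of_mul_eq (t_mul_s (p := p)) 1 b

theorem t_pow_eq_t_pow_of_natCast_eq {a c : ℕ} (h : (a : ZMod (p ^ 2)) = c) : t ^ a = t ^ c :=
  pow_eq_pow_iff_modEq.mpr
    (((ZMod.natCast_eq_natCast_iff _ _ _).mp h).of_dvd (orderOf_dvd_of_pow_eq_one t_pow_sq))

theorem exists_eq_s_pow_mul_t_pow (hp : 0 < p) (g : G) : ∃ b m : ℕ, g = s ^ b * t ^ m := by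
  have hfin : ∀ x ∈ Set.range (PresentedGroup.of : Fin 2 → G), IsOfFinOrder x := by
    rintro _ ⟨i, rfl⟩
    fin_cases i
    · exact isOfFinOrder_iff_pow_eq_one.mpr ⟨p, hp, s_pow_self⟩
    · exact isOfFinOrder_iff_pow_eq_one.mpr ⟨p ^ 2, by positivity, t_pow_sq⟩
  have hg : g ∈ Submonoid.closure (Set.range PresentedGroup.of) := by
    rw [← Subgroup.closure_toSubmonoid_of_isOfFinOrder hfin, PresentedGroup.closure_range_of]
    trivial
  induction hg using Submonoid.closure_induction_left with
  | one => exact ⟨0, 0, by simp⟩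
  | mul_left x hx g _ ih =>
    obtain ⟨i, rfl⟩ := hx
    obtain ⟨b, m, rfl⟩ := ih
    match i with
    | 0 => exact ⟨b + 1, m, by rw [pow_succ', mul_assoc]⟩
    | 1 =>
      refine ⟨b, (p + 1) ^ b + m, ?_⟩
      rw [← mul_assoc, t_mul_s_pow, mul_assoc, ← pow_add]

theorem s_pow_mul_t_pow_pow_self (hp : Odd p) (b m : ℕ) : (s ^ b * t ^ m) ^ p = t ^ (m * p) := by
  rw [mul_pow_pow_eq_of_mul_eq (t_mul_s_pow b), ← pow_mul, mul_comm b, pow_mul, s_pow_self,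
    one_pow, one_mul]
  apply t_pow_eq_t_pow_of_natCast_eq
  obtain ⟨c, hc⟩ := sub_dvd_pow_sub_pow (1 + p : ZMod (p ^ 2)) 1 b
  rw [add_sub_cancel_left, one_pow, sub_eq_iff_eq_add'] at hc
  push_cast
  rw [add_comm _ 1, hc, geom_sum_one_add_mul_eq_of_sq_eq_zero hp natCast_sq_eq_zero]

theorem pow_self_eq_one_of_mul_s_inv_eq (hp : Odd p) {g : G} (h : g * s⁻¹ = s⁻¹ * g ^ (p + 1)) :
    g ^ p = 1 := by
  obtain ⟨b, m, rfl⟩ := exists_eq_s_pow_mul_t_pow hp.pos g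
  rw [s_pow_mul_t_pow_pow_self hp]
  have hcomm : Commute (t ^ (m * p)) (s ^ (b + 1)) := by
    rw [mul_comm, pow_mul]
    exact commute_t_pow_self_s.pow_pow m (b + 1)
  have hpow_p : (t ^ (m * p)) ^ p = 1 := by
    rw [← pow_mul, mul_assoc, ← sq, mul_comm, pow_mul, t_pow_sq, one_pow]
  have hpow_two : (t ^ (m * p)) ^ 2 = 1 := by
    have key : s ^ (b + 1) * t ^ m = s ^ (b + 1) * ((t ^ (m * p)) ^ 2 * t ^ m) :=
      calc s ^ (b + 1) * t ^ m
          = s * (s ^ b * t ^ m * s⁻¹) * s := by group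
        _ = (s ^ b * t ^ m) ^ (p + 1) * s := by rw [h]; group
        _ = t ^ (m * p) * s ^ b * (t ^ m * s) := by
          rw [pow_succ, s_pow_mul_t_pow_pow_self hp]; simp only [mul_assoc]
        _ = t ^ (m * p) * s ^ (b + 1) * t ^ (m * (p + 1)) := by
          rw [← pow_one s, pow_mul_pow_eq_of_mul_eq t_mul_s m 1, pow_one, pow_one, pow_succ]
          simp only [mul_assoc]
        _ = s ^ (b + 1) * ((t ^ (m * p)) ^ 2 * t ^ m) := by
          rw [hcomm.eq, mul_add, mul_one, pow_add t, sq]; simp only [mul_assoc]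
    simpa using mul_left_cancel key
  have := pow_gcd_eq_one.mpr ⟨hpow_two, hpow_p⟩
  rwa [Nat.coprime_two_left.mpr hp, pow_one] at this

end heisRels

/-- For a prime `p ≥ 3`, no automorphism of
`G = C_{p²} ⋊ C_p = ⟨s, t | t^(p²) = s^p = 1, s⁻¹ t s = t^(p+1)⟩` sends `s` to `s⁻¹`. -/
theorem no_aut_inverting_s_modular {p : ℕ} (hp : p.Prime) (hp3 : 3 ≤ p) :
    ∀ α : PresentedGroup (heisRels p) ≃* PresentedGroup (heisRels p),
      α (PresentedGroup.of 0) ≠ (PresentedGroup.of 0)⁻¹ := by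
  intro α hα
  have hαt := congrArg α heisRels.t_mul_s
  rw [map_mul, map_mul, map_pow, hα] at hαt
  apply heisRels.t_pow_self_ne_one (p := p) (by omega)
  apply α.injective
  rw [map_pow, map_one]
  exact heisRels.pow_self_eq_one_of_mul_s_inv_eq (hp.odd_of_ne_two (by omega)) hαt
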